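/- Define v : ℝ → ℝ by v(x) := exp(−x²/2)·π^(−1/2)·∫₀^∞ exp(−t² − 2xt)·t^(−1/2) dt, and for b > 0 set W₁(b) := −v′(0)·(v(b) − b·v′(b)) − v(0)·v′(b). Then W₁(b)·exp(b²/2)·b^(−3/2) tends to √π/Γ(1/4) as b → ∞, where Γ is the real Gamma function. -/

import Mathlib

/-!
Write `v(x) = e^{-x²/2} π^{-1/2} I_{-1/2}(x)` with `I_s(x) = ∫₀^∞ e^{-t²-2xt} t^s dt`.
Differentiating under the integral gives `I_s' = -2 I_{s+1}`, so `e^{b²/2} W₁(b)` is an explicit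
combination of `I_{-1/2}(b)` and `I_{1/2}(b)` with polynomial coefficients, whose constants are
the Gamma values `I_s(0) = Γ((s+1)/2)/2`. From `1 - t² ≤ e^{-t²} ≤ 1`, `I_s(b)` is squeezed between
Laplace transforms of powers of `t`, whence `b^{s+1} I_s(b) → 2^{-(s+1)} Γ(s+1)`. After scaling
by `b^{-3/2}` only the term `Γ(3/4) b^{1/2} I_{-1/2}(b)` survives, and the reflection formula
`Γ(1/4) Γ(3/4) = √2 π` turns its limit into `√π / Γ(1/4)`.
-/

open Set Real Filter

/-- `v(x) = e^(−x²/2) · H_{−1/2}(x)` via the integral representation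
`H_{−1/2}(x) = π^(−1/2) ∫₀^∞ e^(−t² − 2xt) t^(−1/2) dt`. -/
noncomputable def vFun (x : ℝ) : ℝ :=
  Real.exp (-x ^ 2 / 2) * π ^ (-(1 / 2) : ℝ) *
    ∫ t in Set.Ioi (0 : ℝ), Real.exp (-t ^ 2 - 2 * x * t) * t ^ (-(1 / 2) : ℝ)

/-- The Wronskian `W₁(b) = −v′(0)(v(b) − b v′(b)) − v(0) v′(b)` of Example 5.1. -/
noncomputable def W₁ (b : ℝ) : ℝ :=
  -deriv vFun 0 * (vFun b - b * deriv vFun b) - vFun 0 * deriv vFun b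

open MeasureTheory Topology

noncomputable def gaussLaplace (s x : ℝ) : ℝ :=
  ∫ t in Ioi (0 : ℝ), exp (-t ^ 2 - 2 * x * t) * t ^ s

lemma exp_neg_sq_sub_le {x R : ℝ} (hx : |x| ≤ R) (t : ℝ) :
    exp (-t ^ 2 - 2 * x * t) ≤ exp (2 * R ^ 2) * exp (-(1 / 2) * t ^ 2) := by
  rw [← exp_add, exp_le_exp]
  have hx2 : x ^ 2 ≤ R ^ 2 := sq_le_sq' (abs_le.mp hx).1 (abs_le.mp hx).2
  nlinarith [sq_nonneg (x + t / 2)]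

lemma integrableOn_exp_neg_sq_sub_mul_rpow {s : ℝ} (hs : -1 < s) (x : ℝ) :
    IntegrableOn (fun t : ℝ => exp (-t ^ 2 - 2 * x * t) * t ^ s) (Ioi 0) := by
  refine ((integrableOn_rpow_mul_exp_neg_mul_sq (b := 1 / 2) (by norm_num) hs).const_mul
    (exp (2 * |x| ^ 2))).mono' ?_ ?_
  · exact ((by fun_prop : Continuous fun t : ℝ => exp (-t ^ 2 - 2 * x * t)).continuousOn.mul
      (continuousOn_id.rpow_const fun t ht => Or.inl (ne_of_gt ht))).aestronglyMeasurable
      measurableSet_Ioi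
  · filter_upwards [ae_restrict_mem measurableSet_Ioi] with t (ht : 0 < t)
    rw [norm_of_nonneg (by positivity)]
    calc exp (-t ^ 2 - 2 * x * t) * t ^ s
        ≤ exp (2 * |x| ^ 2) * exp (-(1 / 2) * t ^ 2) * t ^ s := by
          gcongr; exact exp_neg_sq_sub_le le_rfl t
      _ = exp (2 * |x| ^ 2) * (t ^ s * exp (-(1 / 2) * t ^ 2)) := by ring

lemma integral_exp_neg_mul_mul_rpow {r s : ℝ} (hr : 0 < r) (hs : -1 < s) :
    ∫ t in Ioi (0 : ℝ), exp (-(r * t)) * t ^ s = r ^ (-(s + 1)) * Gamma (s + 1) := by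
  have h := integral_rpow_mul_exp_neg_mul_Ioi (a := s + 1) (by linarith) hr
  rw [add_sub_cancel_right, one_div, inv_rpow hr.le, ← rpow_neg hr.le] at h
  rw [← h]
  exact setIntegral_congr_fun measurableSet_Ioi fun t _ => mul_comm _ _

lemma integrableOn_exp_neg_mul_mul_rpow {r s : ℝ} (hr : 0 < r) (hs : -1 < s) :
    IntegrableOn (fun t : ℝ => exp (-(r * t)) * t ^ s) (Ioi 0) := by
  refine (integrableOn_rpow_mul_exp_neg_mul_rpow hs one_pos hr).congr_fun
    (fun t _ => ?_) measurableSet_Ioi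
  dsimp only
  rw [rpow_one, mul_comm, neg_mul]

lemma gaussLaplace_le {s b : ℝ} (hs : -1 < s) (hb : 0 < b) :
    gaussLaplace s b ≤ (2 * b) ^ (-(s + 1)) * Gamma (s + 1) := by
  rw [← integral_exp_neg_mul_mul_rpow (by positivity) hs]
  refine setIntegral_mono_on (integrableOn_exp_neg_sq_sub_mul_rpow hs b)
    (integrableOn_exp_neg_mul_mul_rpow (by positivity) hs) measurableSet_Ioi
    fun t (ht : 0 < t) => ?_
  gcongr
  nlinarith

lemma gaussLaplace_ge {s b : ℝ} (hs : -1 < s) (hb : 0 < b) :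
    (2 * b) ^ (-(s + 1)) * Gamma (s + 1) - (2 * b) ^ (-(s + 3)) * Gamma (s + 3)
      ≤ gaussLaplace s b := by
  have hs2 : -1 < s + 2 := by linarith
  have h := integral_exp_neg_mul_mul_rpow (r := 2 * b) (by positivity) hs2
  rw [show s + 2 + 1 = s + 3 by ring] at h
  rw [← integral_exp_neg_mul_mul_rpow (by positivity) hs, ← h, ← integral_sub
    (integrableOn_exp_neg_mul_mul_rpow (by positivity) hs)
    (integrableOn_exp_neg_mul_mul_rpow (by positivity) hs2)]
  refine setIntegral_mono_on ((integrableOn_exp_neg_mul_mul_rpow (by positivity) hs).sub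
    (integrableOn_exp_neg_mul_mul_rpow (by positivity) hs2))
    (integrableOn_exp_neg_sq_sub_mul_rpow hs b) measurableSet_Ioi fun t (ht : 0 < t) => ?_
  have hweight : (1 - t ^ 2) * exp (-(2 * b * t)) ≤ exp (-t ^ 2 - 2 * b * t) := by
    rw [sub_eq_add_neg (-t ^ 2), exp_add, ← neg_mul]
    gcongr
    linarith [add_one_le_exp (-t ^ 2)]
  rw [rpow_add ht, rpow_two]
  nlinarith [rpow_nonneg ht.le s]

lemma rpow_mul_two_mul_rpow {b : ℝ} (hb : 0 < b) (p q : ℝ) :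
    b ^ p * (2 * b) ^ q = 2 ^ q * b ^ (p + q) := by
  rw [mul_rpow zero_le_two hb.le, rpow_add hb]; ring

lemma tendsto_rpow_mul_gaussLaplace {s : ℝ} (hs : -1 < s) :
    Tendsto (fun b => b ^ (s + 1) * gaussLaplace s b) atTop
      (𝓝 (2 ^ (-(s + 1)) * Gamma (s + 1))) := by
  have hlower : Tendsto (fun b : ℝ => 2 ^ (-(s + 1)) * Gamma (s + 1)
      - 2 ^ (-(s + 3)) * Gamma (s + 3) * b ^ (-2 : ℝ)) atTop
      (𝓝 (2 ^ (-(s + 1)) * Gamma (s + 1))) := by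
    simpa using ((tendsto_rpow_neg_atTop two_pos).const_mul
      (2 ^ (-(s + 3)) * Gamma (s + 3))).const_sub (2 ^ (-(s + 1)) * Gamma (s + 1))
  refine tendsto_of_tendsto_of_tendsto_of_le_of_le' hlower tendsto_const_nhds ?_ ?_ <;>
    filter_upwards [eventually_gt_atTop 0] with b hb
  · have h := mul_le_mul_of_nonneg_left (gaussLaplace_ge hs hb) (rpow_nonneg hb.le (s + 1))
    rw [mul_sub, ← mul_assoc, ← mul_assoc, rpow_mul_two_mul_rpow hb,
      rpow_mul_two_mul_rpow hb] at h
    rw [add_neg_cancel, rpow_zero, show s + 1 + -(s + 3) = -2 by ring] at h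
    convert h using 1
    ring
  · have h := mul_le_mul_of_nonneg_left (gaussLaplace_le hs hb) (rpow_nonneg hb.le (s + 1))
    rwa [← mul_assoc, rpow_mul_two_mul_rpow hb, add_neg_cancel, rpow_zero, mul_one] at h

lemma hasDerivAt_exp_neg_sq_sub_mul_rpow (s : ℝ) {t : ℝ} (ht : 0 < t) (x : ℝ) :
    HasDerivAt (fun y => exp (-t ^ 2 - 2 * y * t) * t ^ s)
      (-2 * (exp (-t ^ 2 - 2 * x * t) * t ^ (s + 1))) x := by
  have h := (((hasDerivAt_id x).const_mul 2).mul_const t).const_sub (-t ^ 2) |>.exp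
    |>.mul_const (t ^ s)
  refine h.congr_deriv ?_
  rw [rpow_add_one ht.ne', id, mul_one]
  ring

lemma hasDerivAt_gaussLaplace {s : ℝ} (hs : -1 < s) (x : ℝ) :
    HasDerivAt (gaussLaplace s) (-2 * gaussLaplace (s + 1) x) x := by
  have hs1 : -1 < s + 1 := by linarith
  have h := hasDerivAt_integral_of_dominated_loc_of_deriv_le
    (μ := volume.restrict (Ioi 0)) (x₀ := x) (Metric.ball_mem_nhds x one_pos)
    (F := fun y t => exp (-t ^ 2 - 2 * y * t) * t ^ s)
    (F' := fun y t => -2 * (exp (-t ^ 2 - 2 * y * t) * t ^ (s + 1)))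
    (bound := fun t => 2 * exp (2 * (|x| + 1) ^ 2) * (t ^ (s + 1) * exp (-(1 / 2) * t ^ 2)))
    (Eventually.of_forall fun y => (integrableOn_exp_neg_sq_sub_mul_rpow hs y).aestronglyMeasurable)
    (integrableOn_exp_neg_sq_sub_mul_rpow hs x)
    ((integrableOn_exp_neg_sq_sub_mul_rpow hs1 x).aestronglyMeasurable.const_mul (-2))
    ?_ ((integrableOn_rpow_mul_exp_neg_mul_sq (by norm_num) hs1).const_mul _)
    ?_
  · rw [gaussLaplace, ← integral_const_mul]
    exact h.2
  · filter_upwards [ae_restrict_mem measurableSet_Ioi] with t (ht : 0 < t) y hy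
    have hy : |y| ≤ |x| + 1 := by
      have := abs_sub_abs_le_abs_sub y x
      rw [Metric.mem_ball, dist_eq_norm, norm_eq_abs] at hy
      linarith
    rw [norm_mul, norm_neg, norm_two, norm_of_nonneg (by positivity)]
    calc 2 * (exp (-t ^ 2 - 2 * y * t) * t ^ (s + 1))
        ≤ 2 * (exp (2 * (|x| + 1) ^ 2) * exp (-(1 / 2) * t ^ 2) * t ^ (s + 1)) := by
          gcongr; exact exp_neg_sq_sub_le hy t
      _ = _ := by ring
  · filter_upwards [ae_restrict_mem measurableSet_Ioi] with t (ht : 0 < t) y _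
    exact hasDerivAt_exp_neg_sq_sub_mul_rpow s ht y

lemma gaussLaplace_zero {s : ℝ} (hs : -1 < s) :
    gaussLaplace s 0 = Gamma ((s + 1) / 2) / 2 := by
  rw [gaussLaplace, div_eq_inv_mul, ← one_div, ← integral_rpow_mul_exp_neg_rpow two_pos hs]
  refine setIntegral_congr_fun measurableSet_Ioi fun t _ => ?_
  simp only [mul_zero, zero_mul, sub_zero, rpow_two, mul_comm]

lemma vFun_eq_gaussLaplace (x : ℝ) :
    vFun x = exp (-x ^ 2 / 2) * π ^ (-(1 / 2) : ℝ) * gaussLaplace (-(1 / 2)) x := rfl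

lemma hasDerivAt_vFun (x : ℝ) :
    HasDerivAt vFun (exp (-x ^ 2 / 2) * π ^ (-(1 / 2) : ℝ) *
      (-x * gaussLaplace (-(1 / 2)) x - 2 * gaussLaplace (1 / 2) x)) x := by
  have hI := hasDerivAt_gaussLaplace (s := -(1 / 2)) (by norm_num) x
  rw [show -(1 / 2) + 1 = (1 / 2 : ℝ) by norm_num] at hI
  have hE : HasDerivAt (fun y : ℝ => -y ^ 2 / 2) (-x) x :=
    ((hasDerivAt_pow 2 x).neg.div_const 2).congr_deriv (by ring)
  exact ((hE.exp.mul_const _).mul hI).congr_deriv (by ring)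

lemma vFun_zero : vFun 0 = π ^ (-(1 / 2) : ℝ) * (Gamma (1 / 4) / 2) := by
  rw [vFun_eq_gaussLaplace, gaussLaplace_zero (by norm_num)]
  norm_num

lemma deriv_vFun_zero : deriv vFun 0 = -(π ^ (-(1 / 2) : ℝ) * Gamma (3 / 4)) := by
  rw [(hasDerivAt_vFun 0).deriv, gaussLaplace_zero (s := 1 / 2) (by norm_num),
    show ((1 : ℝ) / 2 + 1) / 2 = 3 / 4 by norm_num]
  simp only [ne_eq, OfNat.ofNat_ne_zero, not_false_eq_true, zero_pow, neg_zero, zero_div, exp_zero]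
  ring

lemma W₁_mul_exp (b : ℝ) :
    W₁ b * exp (b ^ 2 / 2) = π⁻¹ *
      (Gamma (3 / 4) * ((1 + b ^ 2) * gaussLaplace (-(1 / 2)) b + 2 * b * gaussLaplace (1 / 2) b)
        + Gamma (1 / 4) / 2 * (b * gaussLaplace (-(1 / 2)) b + 2 * gaussLaplace (1 / 2) b)) := by
  set I := gaussLaplace (-(1 / 2)) b
  set J := gaussLaplace (1 / 2) b
  set c := π ^ (-(1 / 2) : ℝ)
  have hexp : exp (-b ^ 2 / 2) * exp (b ^ 2 / 2) = 1 := by rw [← exp_add]; ring_nf; exact exp_zero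
  have hc : c * c = π⁻¹ := by rw [← rpow_add pi_pos]; norm_num [rpow_neg_one]
  rw [W₁, (hasDerivAt_vFun b).deriv, vFun_zero, deriv_vFun_zero, vFun_eq_gaussLaplace, ← hc]
  linear_combination
    c * c * (Gamma (3 / 4) * ((1 + b ^ 2) * I + 2 * b * J) + Gamma (1 / 4) / 2 * (b * I + 2 * J))
      * hexp

noncomputable def W₁Rescaled (x u w : ℝ) : ℝ :=
  π⁻¹ * (Gamma (3 / 4) * ((x ^ 2 + 1) * u + 2 * x ^ 2 * w)
    + Gamma (1 / 4) / 2 * (x * u + 2 * x ^ 3 * w))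

lemma W₁_mul_exp_mul_rpow {b : ℝ} (hb : 0 < b) :
    W₁ b * exp (b ^ 2 / 2) * b ^ (-(3 / 2) : ℝ) =
      W₁Rescaled b⁻¹ (b ^ (-(1 / 2) + 1 : ℝ) * gaussLaplace (-(1 / 2)) b)
        (b ^ (1 / 2 + 1 : ℝ) * gaussLaplace (1 / 2) b) := by
  set r := b ^ (-(1 / 2) + 1 : ℝ)
  have h32 : b ^ (-(3 / 2) : ℝ) = r * b⁻¹ ^ 2 := by
    rw [← rpow_neg_one, ← rpow_natCast, ← rpow_mul hb.le, ← rpow_add hb]; norm_num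
  have h12 : b ^ (1 / 2 + 1 : ℝ) = r * b := by
    rw [← rpow_add_one hb.ne']; norm_num
  rw [W₁_mul_exp, h32, h12, W₁Rescaled]
  field_simp

lemma Gamma_one_quarter_mul_Gamma_three_quarters :
    Gamma (1 / 4) * Gamma (3 / 4) = √2 * π := by
  rw [show (3 : ℝ) / 4 = 1 - 1 / 4 by norm_num, Gamma_mul_Gamma_one_sub,
    show π * (1 / 4) = π / 4 by ring, sin_pi_div_four]
  have h2 : √2 ≠ 0 := by positivity
  field_simp
  rw [sq_sqrt zero_le_two]

lemma W₁Rescaled_limit :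
    W₁Rescaled 0 (2 ^ (-(-(1 / 2) + 1) : ℝ) * Gamma (-(1 / 2) + 1))
      (2 ^ (-(1 / 2 + 1) : ℝ) * Gamma (1 / 2 + 1)) = √π / Gamma (1 / 4) := by
  have hG : Gamma (3 / 4) = √2 * π / Gamma (1 / 4) := by
    rw [← Gamma_one_quarter_mul_Gamma_three_quarters, mul_div_cancel_left₀ _ (by positivity)]
  have h2 : (2 : ℝ) ^ (-(-(1 / 2) + 1) : ℝ) = (√2)⁻¹ := by
    rw [sqrt_eq_rpow, ← rpow_neg zero_le_two]; norm_num
  rw [W₁Rescaled, hG, h2, show -(1 / 2) + 1 = (1 / 2 : ℝ) by norm_num, Gamma_one_half_eq]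
  have hπ : √π ≠ 0 := by positivity
  field_simp
  ring

/-- large-`b` asymptotics:
`W₁(b) e^(b²/2) b^(−3/2) → √π / Γ(1/4)` as `b → ∞`. -/
theorem stmt17 :
    Tendsto (fun b : ℝ => W₁ b * Real.exp (b ^ 2 / 2) * b ^ (-(3 / 2) : ℝ)) atTop
      (nhds (Real.sqrt π / Real.Gamma (1 / 4))) := by
  have hcont : Continuous fun p : ℝ × ℝ × ℝ => W₁Rescaled p.1 p.2.1 p.2.2 := by
    unfold W₁Rescaled; fun_prop
  have hlim := (hcont.tendsto _).comp (tendsto_inv_atTop_zero.prodMk_nhds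
    ((tendsto_rpow_mul_gaussLaplace (s := -(1 / 2)) (by norm_num)).prodMk_nhds
      (tendsto_rpow_mul_gaussLaplace (s := 1 / 2) (by norm_num))))
  rw [← W₁Rescaled_limit]
  exact hlim.congr' ((eventually_gt_atTop 0).mono fun b hb => (W₁_mul_exp_mul_rpow hb).symm)
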